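/- arXiv:1109.3322 — 2 statements merged into one kernel-verified Lean document; each statement's English description precedes it below -/
import Mathlib

section
/- If some email exchange starting in a state s properly terminates, then every email exchange starting in s properly terminates. -/
/-- Messages: `send i l G` is a message with note `l` sent by `i` to group `G`;
`fwd i l m G` is the forward by `i` of message `m` with appended note `l`, sent to `G`. -/
inductive Msg (Agent Note : Type) where
  | send : Agent → Note → Finset Agent → Msg Agent Note
  | fwd  : Agent → Note → Msg Agent Note → Finset Agent → Msg Agent Note
  deriving DecidableEq

namespace Msg
variable {Agent Note : Type}

/-- The sender of a message. -/
def sender : Msg Agent Note → Agent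
  | send i _ _ => i
  | fwd i _ _ _ => i

/-- The group of regular recipients of a message. -/
def recip : Msg Agent Note → Finset Agent
  | send _ _ G => G
  | fwd _ _ _ G => G

/-- `S(m)`: the singleton set consisting of the sender. -/
def S (m : Msg Agent Note) : Finset Agent := {m.sender}

/-- Factual information `FI(m)` contained in a message. -/
def FI : Msg Agent Note → Set Note
  | send _ l _ => {l}
  | fwd _ l m _ => FI m ∪ {l}

/-- Wellformedness: all recipient groups are nonempty. -/
def WF : Msg Agent Note → Prop
  | send _ _ G => G.Nonempty
  | fwd _ _ m G => G.Nonempty ∧ m.WF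

/-- `PartOf m' m` : message `m'` is part of the message `m`. -/
inductive PartOf : Msg Agent Note → Msg Agent Note → Prop
  | base (i : Agent) (l : Note) (m : Msg Agent Note) (G : Finset Agent) :
      PartOf m (fwd i l m G)
  | step (i : Agent) (l : Note) (m m' : Msg Agent Note) (G : Finset Agent) :
      PartOf m' m → PartOf m' (fwd i l m G)

end Msg

/-- An email `m_B`: a message together with a set of BCC recipients. -/
structure Email (Agent Note : Type) where
  msg : Msg Agent Note
  bcc : Finset Agent
  deriving DecidableEq

namespace Email
variable {Agent Note : Type} [DecidableEq Agent]

/-- All agents involved in the email: the sender, regular recipients and BCC recipients. -/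
def agents (e : Email Agent Note) : Finset Agent := e.msg.S ∪ e.msg.recip ∪ e.bcc

/-- Wellformedness of an email: the message is wellformed and
`(S(m) ∪ R(m)) ∩ B = ∅`. -/
def WF (e : Email Agent Note) : Prop :=
  e.msg.WF ∧ (e.msg.S ∪ e.msg.recip) ∩ e.bcc = ∅

/-- Indistinguishability of emails for agent `i`. -/
def sim (i : Agent) (e e' : Email Agent Note) : Prop :=
  e.msg = e'.msg ∧
    ((i ∈ e.msg.S ∧ e.bcc = e'.bcc) ∨ i ∈ e.msg.recip \ e.msg.S ∨ i ∈ e.bcc ∩ e'.bcc)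

/-- The email `e` is shared by the group `A`. -/
def SharedBy (A : Finset Agent) (e : Email Agent Note) : Prop :=
  A ⊆ e.msg.S ∪ e.msg.recip ∨ ∃ j ∈ e.bcc, A ⊆ e.msg.S ∪ {j}

end Email

/-- A state: a finite set of emails together with the initial notes of each agent. -/
structure EState (Agent Note : Type) where
  emails : Finset (Email Agent Note)
  notes : Agent → Set Note

namespace EState
variable {Agent Note : Type} [DecidableEq Agent]

/-- The basic requirements on a state: all its emails are wellformed and
it contains at most one email per message. -/
def WF (s : EState Agent Note) : Prop :=
  (∀ e ∈ s.emails, e.WF) ∧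
  ∀ e ∈ s.emails, ∀ e' ∈ s.emails, e.msg = e'.msg → e = e'

/-- Legality of a state: there is a strict partial order on its emails
satisfying conditions L1, L2, L3. -/
def Legal (s : EState Agent Note) : Prop :=
  s.WF ∧
  ∃ r : Email Agent Note → Email Agent Note → Prop,
    (∀ e ∈ s.emails, ¬ r e e) ∧
    (∀ e ∈ s.emails, ∀ e' ∈ s.emails, ∀ e'' ∈ s.emails, r e e' → r e' e'' → r e e'') ∧
    -- L1
    (∀ e ∈ s.emails, ∀ (i : Agent) (l : Note) (m : Msg Agent Note) (G : Finset Agent),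
      e.msg = Msg.fwd i l m G →
      ∃ e' ∈ s.emails, e'.msg = m ∧ r e' e ∧ i ∈ m.S ∪ m.recip ∪ e'.bcc) ∧
    -- L2
    (∀ e ∈ s.emails, ∀ (i : Agent) (l : Note) (G : Finset Agent),
      e.msg = Msg.send i l G → l ∉ s.notes i →
      ∃ e' ∈ s.emails, r e' e ∧ i ∈ e'.msg.recip ∪ e'.bcc ∧ l ∈ e'.msg.FI) ∧
    -- L3
    (∀ e ∈ s.emails, ∀ (i : Agent) (l : Note) (m : Msg Agent Note) (G : Finset Agent),
      e.msg = Msg.fwd i l m G → l ∉ s.notes i →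
      ∃ e' ∈ s.emails, r e' e ∧ i ∈ e'.msg.recip ∪ e'.bcc ∧ l ∈ e'.msg.FI)

/-- Indistinguishability of states for agent `i`. -/
def sim (i : Agent) (s s' : EState Agent Note) : Prop :=
  s.notes i = s'.notes i ∧
  (∀ e ∈ s.emails, i ∈ e.agents → ∃ e' ∈ s'.emails, e.sim i e') ∧
  (∀ e' ∈ s'.emails, i ∈ e'.agents → ∃ e ∈ s.emails, e.sim i e')

/-- `~_A`: the reflexive transitive closure of the union of the relations `~_i`, `i ∈ A`. -/
def simG (G : Finset Agent) : EState Agent Note → EState Agent Note → Prop :=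
  Relation.ReflTransGen (fun t t' => ∃ i ∈ G, t.sim i t')

end EState

/-- Formulas of the epistemic language (with a trivially true formula `tt`
used to form finite conjunctions). -/
inductive Form (Agent Note : Type) where
  | tt   : Form Agent Note
  | msg  : Msg Agent Note → Form Agent Note
  | recv : Agent → Msg Agent Note → Form Agent Note
  | neg  : Form Agent Note → Form Agent Note
  | and  : Form Agent Note → Form Agent Note → Form Agent Note
  | ck   : Finset Agent → Form Agent Note → Form Agent Note

namespace Form
variable {Agent Note : Type}

def imp (φ ψ : Form Agent Note) : Form Agent Note := neg (and φ (neg ψ))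

def iff (φ ψ : Form Agent Note) : Form Agent Note := and (imp φ ψ) (imp ψ φ)

def bigAnd : List (Form Agent Note) → Form Agent Note
  | [] => tt
  | φ :: l => and φ (bigAnd l)

end Form

/-- Truth of a formula in a state. -/
def Sat {Agent Note : Type} [DecidableEq Agent] :
    EState Agent Note → Form Agent Note → Prop
  | _, .tt => True
  | s, .msg m => ∃ B, (⟨m, B⟩ : Email Agent Note) ∈ s.emails
  | s, .recv i m => ∃ B, (⟨m, B⟩ : Email Agent Note) ∈ s.emails ∧ i ∈ m.S ∪ m.recip ∪ B
  | s, .neg φ => ¬ Sat s φ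
  | s, .and φ ψ => Sat s φ ∧ Sat s ψ
  | s, .ck G φ => ∀ s', EState.Legal s' → EState.simG G s s' → Sat s' φ

/-- Validity: truth in all legal states. -/
def Valid {Agent Note : Type} [DecidableEq Agent] (φ : Form Agent Note) : Prop :=
  ∀ s : EState Agent Note, s.Legal → Sat s φ

/-- The formula `m_B` expressing that the message `m` was sent with exactly `B`
as the set of BCC recipients. -/
noncomputable def Email.form {Agent Note : Type} [DecidableEq Agent] [Fintype Agent]
    (e : Email Agent Note) : Form Agent Note :=
  .and (.msg e.msg)
    (.and (Form.bigAnd (e.agents.toList.map fun i => .recv i e.msg))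
      (Form.bigAnd ((e.agentsᶜ : Finset Agent).toList.map fun i => .neg (.recv i e.msg))))

/-- The epistemic information `EI(m)` contained in a message. -/
def Msg.EIF {Agent Note : Type} [DecidableEq Agent] : Msg Agent Note → Form Agent Note
  | .send i l G => .ck ({i} ∪ G) (.msg (.send i l G))
  | .fwd i l m G => .ck ({i} ∪ G) (.and (.msg (.fwd i l m G)) (EIF m))

/-- The epistemic information `EI(m_B)` contained in an email. -/
noncomputable def Email.EIF {Agent Note : Type} [DecidableEq Agent] [Fintype Agent]
    (e : Email Agent Note) : Form Agent Note :=
  .and e.msg.EIF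
    (.and (Form.bigAnd (e.bcc.toList.map fun i =>
        .ck (e.msg.S ∪ {i}) (.and e.msg.EIF (.recv i e.msg))))
      (.ck e.msg.S e.form))

/-- The information gain `IG(m_B, i)` of an agent from an email. -/
noncomputable def Email.IG {Agent Note : Type} [DecidableEq Agent] [Fintype Agent]
    (e : Email Agent Note) (i : Agent) : Form Agent Note :=
  if e.msg.sender = i then e.EIF
  else if i ∈ e.msg.recip then e.msg.EIF
  else .ck (e.msg.S ∪ {i}) (.and e.msg.EIF (.recv i e.msg))

/-- The strict partial order `<` on emails: `e < e'` iff the messages differ and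
`m' → m` is valid. -/
def emailLt {Agent Note : Type} [DecidableEq Agent] (e e' : Email Agent Note) : Prop :=
  e.msg ≠ e'.msg ∧ Valid (Form.imp (.msg e'.msg) (.msg e.msg))

/-- `E_A`: the set of emails of `E` shared by the group `A`. -/
noncomputable def sharedSet {Agent Note : Type} [DecidableEq Agent]
    (E : Finset (Email Agent Note)) (A : Finset Agent) : Finset (Email Agent Note) :=
  @Finset.filter _ (fun e => e.SharedBy A) (fun _ => Classical.propDecidable _) E

/-- The downward closure `E'_≤` of `E' ⊆ E` w.r.t. the order `<`. -/
noncomputable def downClosure {Agent Note : Type} [DecidableEq Agent] [DecidableEq Note]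
    (E E' : Finset (Email Agent Note)) : Finset (Email Agent Note) :=
  E' ∪ @Finset.filter _ (fun e => ∃ e' ∈ E', emailLt e e')
    (fun _ => Classical.propDecidable _) E

/-- The state `s \ m_B`: removing the email from the state while augmenting the
initial notes of its recipients with the factual information of its message. -/
def EState.remove {Agent Note : Type} [DecidableEq Agent] [DecidableEq Note]
    (s : EState Agent Note) (e : Email Agent Note) : EState Agent Note :=
  ⟨s.emails.erase e,
   fun i => if i ∈ e.msg.recip ∪ e.bcc then s.notes i ∪ e.msg.FI else s.notes i⟩

/-- The state `s[m_{B ↦ C}]`: shrinking the BCC set of the email `e = m_B` to `C`,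
augmenting the initial notes of the agents in `B \ C`. -/
def EState.shrink {Agent Note : Type} [DecidableEq Agent] [DecidableEq Note]
    (s : EState Agent Note) (e : Email Agent Note) (C : Finset Agent) : EState Agent Note :=
  ⟨insert ⟨e.msg, C⟩ (s.emails.erase e),
   fun i => if i ∈ e.bcc \ C then s.notes i ∪ e.msg.FI else s.notes i⟩

/-- A mailbox assigns to every agent a set of messages. -/
abbrev Mailbox (Agent Note : Type) := Agent → Set (Msg Agent Note)

/-- A configuration: a state together with a mailbox. -/
abbrev Config (Agent Note : Type) := EState Agent Note × Mailbox Agent Note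

/-- The conditions under which an email with the given message can be processed. -/
def CanProcess {Agent Note : Type} (L : Agent → Set Note) (σ : Mailbox Agent Note) :
    Msg Agent Note → Prop
  | .send i l _ => l ∈ L i ∨ ∃ m' ∈ σ i, l ∈ Msg.FI m'
  | .fwd i l m' _ => m' ∈ σ i ∧ (l ∈ L i ∨ ∃ m'' ∈ σ i, l ∈ Msg.FI m'')

/-- Delivery of an email: the message is added to the mailboxes of the sender,
the regular recipients and the BCC recipients. -/
def deliver {Agent Note : Type} [DecidableEq Agent] (σ : Mailbox Agent Note)
    (e : Email Agent Note) : Mailbox Agent Note :=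
  fun j => if j ∈ e.agents then σ j ∪ {e.msg} else σ j

/-- An atomic transition between configurations, processing one email. -/
def Step {Agent Note : Type} [DecidableEq Agent] [DecidableEq Note]
    (c c' : Config Agent Note) : Prop :=
  ∃ e ∈ c.1.emails, CanProcess c.1.notes c.2 e.msg ∧
    c'.1 = ⟨c.1.emails.erase e, c.1.notes⟩ ∧ c'.2 = deliver c.2 e

/-- The initial configuration: the state together with the empty mailbox. -/
def startConfig {Agent Note : Type} (s : EState Agent Note) : Config Agent Note :=
  (s, fun _ => ∅)

/-- An email exchange starting in `s`: a maximal sequence of atomic transitions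
starting in the configuration `⟨s, σ₀⟩`. -/
def IsExchange {Agent Note : Type} [DecidableEq Agent] [DecidableEq Note]
    (s : EState Agent Note) (cs : List (Config Agent Note)) : Prop :=
  List.Chain Step (startConfig s) cs ∧
  ∀ c', ¬ Step ((startConfig s :: cs).getLast (List.cons_ne_nil _ _)) c'

/-- An email exchange properly terminates if its last configuration has an
empty set of emails. -/
def ProperlyTerminates {Agent Note : Type} [DecidableEq Agent] [DecidableEq Note]
    (s : EState Agent Note) (cs : List (Config Agent Note)) : Prop :=
  ((startConfig s :: cs).getLast (List.cons_ne_nil _ _)).1.emails = ∅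

/-! Reachable configurations only depend on the set of pending emails, and a smaller pending set
means a larger mailbox, so processability is monotone along runs. If an exchange gets stuck with
pending emails `E`, a properly terminating exchange must at some point process a first email of
`E`; at that moment all of `E` is pending, so the stuck configuration has a larger mailbox and
could process the same email. -/

theorem CanProcess.mono {Agent Note : Type} {L : Agent → Set Note} {σ σ' : Mailbox Agent Note}
    (hσ : σ ≤ σ') {m : Msg Agent Note} (hm : CanProcess L σ m) : CanProcess L σ' m := by
  cases m with
  | send i l G => exact hm.imp_right fun ⟨m', hm', hl⟩ => ⟨m', hσ i hm', hl⟩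
  | fwd i l m' G =>
    exact ⟨hσ i hm.1, hm.2.imp_right fun ⟨m'', hm'', hl⟩ => ⟨m'', hσ i hm'', hl⟩⟩

section Termination
variable {Agent Note : Type} [DecidableEq Agent] [DecidableEq Note]

/-- The mailbox once exactly the emails of `s` outside `E` have been processed. -/
def mailboxAfter (s : EState Agent Note) (E : Finset (Email Agent Note)) : Mailbox Agent Note :=
  fun j => {m | ∃ e ∈ s.emails \ E, j ∈ e.agents ∧ e.msg = m}

def configAfter (s : EState Agent Note) (E : Finset (Email Agent Note)) : Config Agent Note :=
  (⟨E, s.notes⟩, mailboxAfter s E)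

theorem mailboxAfter_antitone (s : EState Agent Note) : Antitone (mailboxAfter s) :=
  fun _ _ hEF _ _ ⟨e, he, hje, hm⟩ =>
    ⟨e, Finset.sdiff_subset_sdiff subset_rfl hEF he, hje, hm⟩

theorem mailboxAfter_erase {s : EState Agent Note} {E : Finset (Email Agent Note)}
    {e : Email Agent Note} (he : e ∈ s.emails) :
    mailboxAfter s (E.erase e) = deliver (mailboxAfter s E) e := by
  funext j
  ext m
  by_cases hj : j ∈ e.agents <;>
    simp [mailboxAfter, deliver, Finset.sdiff_erase he, hj, eq_comm (a := m)]

theorem configAfter_emails_eq_startConfig (s : EState Agent Note) :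
    configAfter s s.emails = startConfig s := by
  simp [configAfter, startConfig, mailboxAfter, funext_iff]

theorem exists_eq_configAfter {s : EState Agent Note} {c : Config Agent Note}
    (hc : Relation.ReflTransGen Step (startConfig s) c) :
    ∃ E ⊆ s.emails, c = configAfter s E := by
  induction hc with
  | refl => exact ⟨s.emails, subset_rfl, (configAfter_emails_eq_startConfig s).symm⟩
  | tail _ hstep ih =>
    obtain ⟨E, hEs, rfl⟩ := ih
    obtain ⟨e, he, -, h₁, h₂⟩ := hstep
    exact ⟨E.erase e, (Finset.erase_subset _ _).trans hEs,
      Prod.ext h₁ (h₂.trans (mailboxAfter_erase (hEs he)).symm)⟩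

theorem exists_canProcess_of_not_subset {c₀ c : Config Agent Note}
    {E : Finset (Email Agent Note)} (hrun : Relation.ReflTransGen Step c₀ c)
    (hE₀ : E ⊆ c₀.1.emails) (hE : ¬ E ⊆ c.1.emails) :
    ∃ d, Relation.ReflTransGen Step c₀ d ∧ E ⊆ d.1.emails ∧
      ∃ e ∈ E, CanProcess d.1.notes d.2 e.msg := by
  induction hrun with
  | refl => exact absurd hE₀ hE
  | @tail b c hb hstep ih =>
    by_cases hEb : E ⊆ b.1.emails
    · obtain ⟨e, -, hcan, h₁, -⟩ := hstep
      have heE : e ∈ E := by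
        by_contra heE
        exact hE fun x hx => h₁ ▸ Finset.mem_erase.2 ⟨fun h => heE (h ▸ hx), hEb hx⟩
      exact ⟨b, hb, hEb, e, heE, hcan⟩
    · exact ih hEb

theorem reflTransGen_startConfig_getLast {s : EState Agent Note}
    {cs : List (Config Agent Note)} (hcs : List.IsChain Step (startConfig s :: cs)) :
    Relation.ReflTransGen Step (startConfig s)
      ((startConfig s :: cs).getLast (List.cons_ne_nil _ _)) :=
  List.relationReflTransGen_of_exists_isChain_cons cs hcs rfl

end Termination

theorem terminating_exchange_all_general {Agent Note : Type} [DecidableEq Agent]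
    [DecidableEq Note] (s : EState Agent Note)
    (h : ∃ cs : List (Config Agent Note), IsExchange s cs ∧ ProperlyTerminates s cs) :
    ∀ cs : List (Config Agent Note), IsExchange s cs → ProperlyTerminates s cs := by
  obtain ⟨cs₀, ⟨hchain₀, -⟩, hterm₀⟩ := h
  rintro cs ⟨hchain, hstuck⟩
  obtain ⟨E, hEs, hlast⟩ := exists_eq_configAfter (reflTransGen_startConfig_getLast hchain)
  rw [hlast] at hstuck
  rw [ProperlyTerminates, hlast]
  by_contra hpending
  have hE : ¬ E ⊆ ((startConfig s :: cs₀).getLast (List.cons_ne_nil _ _)).1.emails := by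
    rw [hterm₀, Finset.subset_empty]
    exact hpending
  obtain ⟨d, hd, hEd, e, he, hcan⟩ :=
    exists_canProcess_of_not_subset (reflTransGen_startConfig_getLast hchain₀) hEs hE
  obtain ⟨Ed, -, rfl⟩ := exists_eq_configAfter hd
  exact hstuck (_, _) ⟨e, he, hcan.mono (mailboxAfter_antitone s hEd), rfl, rfl⟩

/-- if some email exchange starting in `s` properly terminates, then
every email exchange starting in `s` properly terminates. -/
theorem terminating_exchange_all {Agent Note : Type} [DecidableEq Agent] [Fintype Agent]
    [Nonempty Agent] [DecidableEq Note] (s : EState Agent Note) (hwf : s.WF)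
    (h : ∃ cs : List (Config Agent Note), IsExchange s cs ∧ ProperlyTerminates s cs) :
    ∀ cs : List (Config Agent Note), IsExchange s cs → ProperlyTerminates s cs :=
  terminating_exchange_all_general s h
end

section
/- If some email exchange starting in a state s properly terminates, then s is a legal state. -/
/-!
Process the emails in the order of the terminating exchange and let one email precede another
when it is processed earlier. Every forwarded message was in the forwarder's mailbox, hence was
delivered to it by an earlier email (L1). A note that is not among an agent's initial notes can
only have entered its mailbox through the factual information of messages; following these back
to the first email that carried the note to the agent as a (BCC) recipient, rather than as the
sender, gives L2 and L3.
-/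

section ProcessingOrder

variable {Agent Note : Type}

lemma CanProcess.exists_mem_FI {L : Agent → Set Note} {σ : Mailbox Agent Note}
    {m : Msg Agent Note} {l : Note} (h : CanProcess L σ m) (hl : l ∈ m.FI)
    (hlL : l ∉ L m.sender) : ∃ m' ∈ σ m.sender, l ∈ m'.FI := by
  cases m with
  | send i l' G =>
    simp only [CanProcess, Msg.FI, Set.mem_singleton_iff] at h hl
    subst hl
    exact h.resolve_left hlL
  | fwd i l' m G =>
    simp only [CanProcess, Msg.FI, Set.mem_union, Set.mem_singleton_iff] at h hl
    rcases hl with hl | rfl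
    · exact ⟨m, h.1, hl⟩
    · exact h.2.resolve_left hlL

variable [DecidableEq Agent]

lemma mem_foldl_deliver (es : List (Email Agent Note)) (σ : Mailbox Agent Note) (i : Agent)
    (m : Msg Agent Note) :
    m ∈ es.foldl deliver σ i ↔ m ∈ σ i ∨ ∃ e ∈ es, e.msg = m ∧ i ∈ e.agents := by
  induction es generalizing σ with
  | nil => simp
  | cons e es ih =>
    rw [List.foldl_cons, ih]
    grind [deliver]

def IsProcessingOrder (L : Agent → Set Note) (σ : Mailbox Agent Note)
    (es : List (Email Agent Note)) : Prop :=
  ∀ pre e post, es = pre ++ e :: post → CanProcess L (pre.foldl deliver σ) e.msg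

lemma isProcessingOrder_cons {L : Agent → Set Note} {σ : Mailbox Agent Note}
    {e : Email Agent Note} {es : List (Email Agent Note)} (he : CanProcess L σ e.msg)
    (hes : IsProcessingOrder L (deliver σ e) es) : IsProcessingOrder L σ (e :: es) := by
  rintro (_ | ⟨e', pre⟩) e'' post h <;>
    simp only [List.nil_append, List.cons_append, List.cons.injEq] at h <;>
    obtain ⟨rfl, h⟩ := h
  · exact he
  · exact hes pre e'' post h

lemma exists_isProcessingOrder_of_isChain [DecidableEq Note] (c : Config Agent Note)
    (cs : List (Config Agent Note)) (hchain : List.IsChain Step (c :: cs))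
    (hterm : ((c :: cs).getLast (List.cons_ne_nil _ _)).1.emails = ∅) :
    ∃ es : List (Email Agent Note), es.Nodup ∧ (∀ e, e ∈ es ↔ e ∈ c.1.emails) ∧
      IsProcessingOrder c.1.notes c.2 es := by
  induction cs generalizing c with
  | nil =>
    refine ⟨[], List.nodup_nil, ?_, fun pre e post h => by simp at h⟩
    simp_all
  | cons c' cs ih =>
    obtain ⟨⟨e, he, hcan, hstate, hmailbox⟩, hchain⟩ := List.isChain_cons_cons.mp hchain
    obtain ⟨es, hnd, hmem, hes⟩ := ih c' hchain (by simpa using hterm)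
    simp only [hstate, Finset.mem_erase, hmailbox] at hmem hes
    refine ⟨e :: es, List.nodup_cons.mpr ⟨fun h => ((hmem e).mp h).1 rfl, hnd⟩, ?_,
      isProcessingOrder_cons hcan hes⟩
    grind

lemma IsProcessingOrder.exists_informing_of_mem_mailbox {L : Agent → Set Note}
    {es pre : List (Email Agent Note)} (hes : IsProcessingOrder L (fun _ => ∅) es)
    (hpre : pre <+: es) {i : Agent} {l : Note} {m : Msg Agent Note}
    (hm : m ∈ pre.foldl deliver (fun _ => ∅) i) (hl : l ∈ m.FI) (hlL : l ∉ L i) :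
    ∃ e ∈ pre, i ∈ e.msg.recip ∪ e.bcc ∧ l ∈ e.msg.FI := by
  induction pre using List.reverseRecOn generalizing m with
  | nil => simp at hm
  | append_singleton pre e ih =>
    obtain ⟨post, hsplit⟩ := hpre
    have hpre : pre <+: es := ⟨e :: post, by simp [← hsplit]⟩
    have hcan : CanProcess L (pre.foldl deliver (fun _ => ∅)) e.msg :=
      hes pre e post (by simp [← hsplit])
    have ih' : ∀ m ∈ pre.foldl deliver (fun _ => ∅) i, l ∈ m.FI →
        ∃ e' ∈ pre ++ [e], i ∈ e'.msg.recip ∪ e'.bcc ∧ l ∈ e'.msg.FI := fun m hm hl =>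
      (ih hpre hm hl).imp fun _ ⟨he', hinf⟩ => ⟨List.mem_append_left _ he', hinf⟩
    rw [List.foldl_append, List.foldl_cons, List.foldl_nil] at hm
    unfold deliver at hm
    split_ifs at hm with hi
    · rcases hm with hm | rfl
      · exact ih' m hm hl
      by_cases hrecv : i ∈ e.msg.recip ∪ e.bcc
      · exact ⟨e, by simp, hrecv, hl⟩
      have hsender : e.msg.sender = i := by
        simpa [Email.agents, Msg.S, hrecv, eq_comm] using hi
      subst hsender
      obtain ⟨m', hm', hlm'⟩ := hcan.exists_mem_FI hl hlL
      exact ih' m' hm' hlm'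
    · exact ih' m hm hl

lemma idxOf_lt_idxOf_of_mem_of_eq_append {α : Type*} [BEq α] [LawfulBEq α] {es pre post : List α}
    {a b : α} (hnd : es.Nodup) (hsplit : es = pre ++ b :: post) (ha : a ∈ pre) :
    es.idxOf a < es.idxOf b := by
  have hb : b ∉ pre := by
    subst hsplit
    exact fun hb => (List.nodup_append.mp hnd).2.2 b hb b List.mem_cons_self rfl
  rw [hsplit, List.idxOf_append_of_mem ha, List.idxOf_append_of_notMem hb, List.idxOf_cons_self]
  simpa using List.idxOf_lt_length_of_mem ha

lemma EState.legal_of_isProcessingOrder [DecidableEq Note] {s : EState Agent Note}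
    {es : List (Email Agent Note)} (hwf : s.WF) (hnd : es.Nodup)
    (hmem : ∀ e, e ∈ es ↔ e ∈ s.emails) (hes : IsProcessingOrder s.notes (fun _ => ∅) es) :
    s.Legal := by
  have hsplit : ∀ e ∈ s.emails, ∃ pre post, es = pre ++ e :: post :=
    fun e he => List.append_of_mem ((hmem e).mpr he)
  have hbefore : ∀ {pre post e}, es = pre ++ e :: post → ∀ e' ∈ pre,
      e' ∈ s.emails ∧ es.idxOf e' < es.idxOf e := fun h e' he' =>
    ⟨(hmem e').mp (h ▸ List.mem_append_left _ he'), idxOf_lt_idxOf_of_mem_of_eq_append hnd h he'⟩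
  have hnotes : ∀ e ∈ s.emails, ∀ i l, e.msg.sender = i → l ∈ e.msg.FI → l ∉ s.notes i →
      ∃ e' ∈ s.emails, es.idxOf e' < es.idxOf e ∧ i ∈ e'.msg.recip ∪ e'.bcc ∧ l ∈ e'.msg.FI := by
    rintro e he _ l rfl hl hlL
    obtain ⟨pre, post, h⟩ := hsplit e he
    obtain ⟨m, hm, hlm⟩ := (hes pre e post h).exists_mem_FI hl hlL
    obtain ⟨e', he', hinf⟩ := hes.exists_informing_of_mem_mailbox ⟨e :: post, h.symm⟩ hm hlm hlL
    exact ⟨e', (hbefore h e' he').1, (hbefore h e' he').2, hinf⟩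
  refine ⟨hwf, fun e e' => es.idxOf e < es.idxOf e', fun _ _ => lt_irrefl _,
    fun _ _ _ _ _ _ => lt_trans, ?_, ?_, ?_⟩
  · intro e he i l m G hfwd
    obtain ⟨pre, post, h⟩ := hsplit e he
    have hcan := hes pre e post h
    rw [hfwd] at hcan
    obtain hm | ⟨e', he', rfl, hi⟩ := (mem_foldl_deliver _ _ _ _).mp hcan.1
    · exact absurd hm (Set.notMem_empty m)
    exact ⟨e', (hbefore h e' he').1, rfl, (hbefore h e' he').2, hi⟩
  · intro e he i l G hsend
    exact hnotes e he i l (by simp [hsend, Msg.sender]) (by simp [hsend, Msg.FI])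
  · intro e he i l m G hfwd
    exact hnotes e he i l (by simp [hfwd, Msg.sender]) (by simp [hfwd, Msg.FI])

end ProcessingOrder

theorem terminating_exchange_implies_legal_general {Agent Note : Type} [DecidableEq Agent]
    [DecidableEq Note] (s : EState Agent Note)
    (hwf : s.WF)
    (h : ∃ cs : List (Config Agent Note), IsExchange s cs ∧ ProperlyTerminates s cs) :
    s.Legal := by
  obtain ⟨cs, ⟨hchain, -⟩, hterm⟩ := h
  obtain ⟨es, hnd, hmem, hes⟩ := exists_isProcessingOrder_of_isChain _ _ hchain hterm
  exact EState.legal_of_isProcessingOrder hwf hnd hmem hes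

/-- if some email exchange starting in `s` properly terminates, then
`s` is a legal state. -/
theorem terminating_exchange_implies_legal {Agent Note : Type} [DecidableEq Agent]
    [Fintype Agent] [Nonempty Agent] [DecidableEq Note] (s : EState Agent Note)
    (hwf : s.WF)
    (h : ∃ cs : List (Config Agent Note), IsExchange s cs ∧ ProperlyTerminates s cs) :
    s.Legal :=
  terminating_exchange_implies_legal_general s hwf h
end
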